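/- arXiv:2104.04038 — 8 statements merged into one kernel-verified Lean document; each statement's English description precedes it below -/
import Mathlib

section
/- Let U ⊆ ℝⁿ and U' ⊆ ℝᵖ be open, f : U → U' and g : U' → ℝ smooth submersions, and h = g ∘ f. For each x ∈ U, setting M = h⁻¹(h(x)), there exists a unique vector v(x) ∈ TₓM orthogonal to ker Dfₓ and a scalar α(x) > 0 such that Dfₓ(v(x) + α(x)∇h(x)) = ∇g(f(x)). -/
open scoped RealInnerProductSpace

/-- Gradient lifting lemma: for submersions `f : U → U'` and `g : U' → ℝ` with
`h = g ∘ f`, at each `x ∈ U` there is a unique vector `v` tangent to the level set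
of `h` (i.e. `v ∈ ker Dhₓ`), orthogonal to `ker Dfₓ`, such that
`Dfₓ(v + α ∇h(x)) = ∇g(f x)` for some `α > 0`. -/
theorem stmt_2 (n p : ℕ)
    (U : Set (EuclideanSpace ℝ (Fin n))) (U' : Set (EuclideanSpace ℝ (Fin p)))
    (hU : IsOpen U) (hU' : IsOpen U')
    (f : EuclideanSpace ℝ (Fin n) → EuclideanSpace ℝ (Fin p))
    (g : EuclideanSpace ℝ (Fin p) → ℝ)
    (hfU : Set.MapsTo f U U')
    (hf : ContDiffOn ℝ (⊤ : ℕ∞) f U) (hg : ContDiffOn ℝ (⊤ : ℕ∞) g U')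
    (hfsub : ∀ y ∈ U, Function.Surjective (fderiv ℝ f y))
    (hgsub : ∀ y ∈ U', Function.Surjective (fderiv ℝ g y))
    (h : EuclideanSpace ℝ (Fin n) → ℝ) (hh : h = g ∘ f)
    (x : EuclideanSpace ℝ (Fin n)) (hx : x ∈ U) :
    ∃! v : EuclideanSpace ℝ (Fin n),
      fderiv ℝ h x v = 0 ∧
      (∀ u, fderiv ℝ f x u = 0 → ⟪v, u⟫ = 0) ∧
      ∃ α : ℝ, 0 < α ∧ fderiv ℝ f x (v + α • gradient h x) = gradient g (f x) := by
  subst hh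
  have hfd : DifferentiableAt ℝ f x :=
    (hf.contDiffAt (hU.mem_nhds hx)).differentiableAt (by simp)
  have hgd : DifferentiableAt ℝ g (f x) :=
    (hg.contDiffAt (hU'.mem_nhds (hfU hx))).differentiableAt (by simp)
  set D := fderiv ℝ f x with hD
  set G := fderiv ℝ g (f x) with hG
  have hchain : fderiv ℝ (g ∘ f) x = G.comp D := fderiv_comp x hgd hfd
  set w := gradient (g ∘ f) x with hw
  set z := gradient g (f x) with hz
  -- inner products compute fderivs
  have hwi' : ∀ u, ⟪w, u⟫ = fderiv ℝ (g ∘ f) x u := fun u =>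
    InnerProductSpace.toDual_symm_apply
  have hwi : ∀ u, ⟪w, u⟫ = G (D u) := by
    intro u; rw [hwi' u, hchain]; rfl
  have hzi : ∀ u, ⟪z, u⟫ = G u := fun u => InnerProductSpace.toDual_symm_apply
  have hDs : Function.Surjective D := hfsub x hx
  have hGs : Function.Surjective G := hgsub (f x) (hfU hx)
  -- nonvanishing of gradients
  have hz0 : z ≠ 0 := by
    obtain ⟨u, hu⟩ := hGs 1
    intro hc
    have := hzi u
    rw [hc, inner_zero_left, hu] at this
    exact one_ne_zero this.symm
  have hw0 : w ≠ 0 := by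
    obtain ⟨u', hu'⟩ := hGs 1
    obtain ⟨u, hu⟩ := hDs u'
    intro hc
    have := hwi u
    rw [hc, inner_zero_left, hu, hu'] at this
    exact one_ne_zero this.symm
  have hwpos : (0:ℝ) < ⟪w, w⟫ :=
    real_inner_self_nonneg.lt_of_ne' (fun hc => hw0 (inner_self_eq_zero.mp hc))
  have hzpos : (0:ℝ) < ⟪z, z⟫ :=
    real_inner_self_nonneg.lt_of_ne' (fun hc => hz0 (inner_self_eq_zero.mp hc))
  -- kernel of D and orthogonality of w
  set K : Submodule ℝ (EuclideanSpace ℝ (Fin n)) := LinearMap.ker (D : EuclideanSpace ℝ (Fin n) →ₗ[ℝ] EuclideanSpace ℝ (Fin p)) with hK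
  have hwK : w ∈ Kᗮ := by
    intro u hu
    have hu0 : D u = 0 := hu
    rw [real_inner_comm, hwi, hu0, map_zero]
  -- construct v'' ∈ Kᗮ with D v'' = z
  obtain ⟨w₀, hw₀⟩ := hDs z
  set v'' : EuclideanSpace ℝ (Fin n) := w₀ - K.orthogonalProjectionOnto w₀ with hv''
  have hv''K : v'' ∈ Kᗮ := K.sub_starProjection_mem_orthogonal w₀
  have hDv'' : D v'' = z := by
    have hmem : ((K.orthogonalProjectionOnto w₀ : K) : EuclideanSpace ℝ (Fin n)) ∈ K :=
      (K.orthogonalProjectionOnto w₀).2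
    have h0 : D ((K.orthogonalProjectionOnto w₀ : K) : EuclideanSpace ℝ (Fin n)) = 0 := hmem
    rw [hv'', map_sub, h0, hw₀, sub_zero]
  have hwv'' : ⟪w, v''⟫ = ⟪z, z⟫ := by rw [hwi, hDv'', ← hzi]
  -- the candidate
  set α : ℝ := ⟪z, z⟫ / ⟪w, w⟫ with hα
  have hαpos : 0 < α := div_pos hzpos hwpos
  set v : EuclideanSpace ℝ (Fin n) := v'' - α • w with hv
  have hvK : v ∈ Kᗮ := Kᗮ.sub_mem hv''K (Kᗮ.smul_mem α hwK)
  have hvorth : ∀ u, D u = 0 → ⟪v, u⟫ = 0 := by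
    intro u hu
    rw [real_inner_comm]
    exact hvK u hu
  refine ⟨v, ⟨?_, hvorth, α, hαpos, ?_⟩, ?_⟩
  · have hkey : ⟪w, v⟫ = 0 := by
      rw [hv, inner_sub_right, real_inner_smul_right, hwv'', hα,
        div_mul_cancel₀ _ (ne_of_gt hwpos), sub_self]
    rw [← hwi']; exact hkey
  · have : v + α • w = v'' := by rw [hv]; abel
    rw [this]; exact hDv''
  · rintro v₁ ⟨h1, h2, α₁, hα₁, h3⟩
    -- first show α₁ = α
    have e1 : G (D (v₁ + α₁ • w)) = ⟪z, z⟫ := by rw [h3, ← hzi]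
    have e2 : ⟪w, v₁⟫ + α₁ * ⟪w, w⟫ = ⟪z, z⟫ := by
      rw [← e1, ← hwi, inner_add_right, real_inner_smul_right]
    have e3 : ⟪w, v₁⟫ = 0 := by rw [hwi' v₁, h1]
    have eα : α₁ = α := by
      rw [e3, zero_add] at e2
      rw [hα, eq_div_iff (ne_of_gt hwpos)]
      exact e2
    subst eα
    have e4 : D (v₁ - v) = 0 := by
      have e5 : D (v + α • w) = z := by
        have : v + α • w = v'' := by rw [hv]; abel
        rw [this]; exact hDv''
      have := h3.trans e5.symm
      rw [map_add, map_add] at this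
      rw [map_sub, sub_eq_zero]
      exact add_right_cancel this
    have e6 : ⟪v₁ - v, v₁ - v⟫ = 0 := by
      rw [inner_sub_left, h2 _ e4, hvorth _ e4, sub_zero]
    have := inner_self_eq_zero.mp e6
    rw [sub_eq_zero] at this
    exact this
end

section
/- In the setting of the gradient lifting lemma (f : U → U', g : U' → ℝ submersions, h = g ∘ f, and v(x) + α(x)∇h(x) the normal lifting of ∇g(f(x))), the positive scalar α satisfies α(x) = ‖∇g(f(x))‖² / ‖∇h(x)‖². -/
open scoped RealInnerProductSpace

lemma fderiv_eq_inner_gradient {n : ℕ} (h : EuclideanSpace ℝ (Fin n) → ℝ)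
    (x y : EuclideanSpace ℝ (Fin n)) : fderiv ℝ h x y = ⟪gradient h x, y⟫ := by
  rw [gradient]
  exact (InnerProductSpace.toDual_symm_apply (E := EuclideanSpace ℝ (Fin n)) (y := fderiv ℝ h x) (x := y)).symm

/-- In the gradient lifting lemma, the positive scalar `α` satisfies
`α = ‖∇g(f x)‖² / ‖∇h(x)‖²`. -/
theorem stmt_3 (n p : ℕ)
    (f : EuclideanSpace ℝ (Fin n) → EuclideanSpace ℝ (Fin p))
    (g : EuclideanSpace ℝ (Fin p) → ℝ)
    (h : EuclideanSpace ℝ (Fin n) → ℝ) (hh : h = g ∘ f)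
    (x : EuclideanSpace ℝ (Fin n))
    (hf : DifferentiableAt ℝ f x) (hg : DifferentiableAt ℝ g (f x))
    (hgradh : gradient h x ≠ 0)
    (v : EuclideanSpace ℝ (Fin n)) (α : ℝ) (hα : 0 < α)
    (hv1 : fderiv ℝ h x v = 0)
    (hv2 : ∀ u, fderiv ℝ f x u = 0 → ⟪v, u⟫ = 0)
    (heq : fderiv ℝ f x (v + α • gradient h x) = gradient g (f x)) :
    α = ‖gradient g (f x)‖ ^ 2 / ‖gradient h x‖ ^ 2 := by
  have hchain : fderiv ℝ h x = (fderiv ℝ g (f x)).comp (fderiv ℝ f x) := by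
    rw [hh]; exact fderiv_comp x hg hf
  have key : fderiv ℝ h x (v + α • gradient h x) = ‖gradient g (f x)‖ ^ 2 := by
    rw [hchain]
    simp only [ContinuousLinearMap.comp_apply, heq]
    rw [fderiv_eq_inner_gradient, real_inner_self_eq_norm_sq]
  rw [map_add, hv1, zero_add, map_smul, smul_eq_mul,
    fderiv_eq_inner_gradient, real_inner_self_eq_norm_sq] at key
  have hn : ‖gradient h x‖ ^ 2 ≠ 0 := pow_ne_zero _ (norm_ne_zero_iff.mpr hgradh)
  field_simp
  linarith [key]
end

section
/- Let f : U → U' and g : U' → ℝ be submersions with h = g ∘ f, x ∈ U, and let Lₓ ⊆ ker Dhₓ be a codimension-1 subspace of ker Dhₓ that is transverse to ker Dfₓ within ker Dhₓ. Then there exists a unique vector v̄(x) ∈ Lₓ orthogonal to Lₓ ∩ ker Dfₓ and a scalar α(x) > 0 such that Dfₓ(v̄(x) + α(x)∇h(x)) = ∇g(f(x)). -/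
open scoped RealInnerProductSpace

/-- Corollary of the gradient lifting lemma: if `Lₓ ⊆ ker Dhₓ` is a codimension-1
subspace of `ker Dhₓ` transverse to `ker Dfₓ` within `ker Dhₓ`, then there is a
unique `v̄ ∈ Lₓ` orthogonal to `Lₓ ∩ ker Dfₓ` with
`Dfₓ(v̄ + α ∇h(x)) = ∇g(f x)` for some `α > 0`. -/
theorem stmt_4 (n p : ℕ)
    (U : Set (EuclideanSpace ℝ (Fin n))) (U' : Set (EuclideanSpace ℝ (Fin p)))
    (hU : IsOpen U) (hU' : IsOpen U')
    (f : EuclideanSpace ℝ (Fin n) → EuclideanSpace ℝ (Fin p))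
    (g : EuclideanSpace ℝ (Fin p) → ℝ)
    (hfU : Set.MapsTo f U U')
    (hf : ContDiffOn ℝ (⊤ : ℕ∞) f U) (hg : ContDiffOn ℝ (⊤ : ℕ∞) g U')
    (hfsub : ∀ y ∈ U, Function.Surjective (fderiv ℝ f y))
    (hgsub : ∀ y ∈ U', Function.Surjective (fderiv ℝ g y))
    (h : EuclideanSpace ℝ (Fin n) → ℝ) (hh : h = g ∘ f)
    (x : EuclideanSpace ℝ (Fin n)) (hx : x ∈ U)
    (L : Submodule ℝ (EuclideanSpace ℝ (Fin n)))
    (hL : L ≤ LinearMap.ker (fderiv ℝ h x : EuclideanSpace ℝ (Fin n) →ₗ[ℝ] ℝ))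
    (hcodim : Module.finrank ℝ L + 1 = Module.finrank ℝ (LinearMap.ker (fderiv ℝ h x : EuclideanSpace ℝ (Fin n) →ₗ[ℝ] ℝ)))
    (htrans : L ⊔ LinearMap.ker (fderiv ℝ f x : EuclideanSpace ℝ (Fin n) →ₗ[ℝ] EuclideanSpace ℝ (Fin p)) =
      LinearMap.ker (fderiv ℝ h x : EuclideanSpace ℝ (Fin n) →ₗ[ℝ] ℝ)) :
    ∃! v : EuclideanSpace ℝ (Fin n),
      v ∈ L ∧
      (∀ u ∈ L ⊓ LinearMap.ker (fderiv ℝ f x : EuclideanSpace ℝ (Fin n) →ₗ[ℝ] EuclideanSpace ℝ (Fin p)), ⟪v, u⟫ = 0) ∧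
      ∃ α : ℝ, 0 < α ∧ fderiv ℝ f x (v + α • gradient h x) = gradient g (f x) := by
  have hfx' : f x ∈ U' := hfU hx
  have hdf : DifferentiableAt ℝ f x :=
    ((hf.contDiffAt (hU.mem_nhds hx)).differentiableAt (by simp))
  have hdg : DifferentiableAt ℝ g (f x) :=
    ((hg.contDiffAt (hU'.mem_nhds hfx')).differentiableAt (by simp))
  have hchain : fderiv ℝ h x = (fderiv ℝ g (f x)).comp (fderiv ℝ f x) := by
    rw [hh]; exact fderiv_comp x hdg hdf
  have hgrad : ∀ (q : EuclideanSpace ℝ (Fin p) → ℝ) (y v : EuclideanSpace ℝ (Fin p)),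
      fderiv ℝ q y v = ⟪gradient q y, v⟫ := by
    intro q y v
    rw [gradient, InnerProductSpace.toDual_symm_apply]
  have hgradn : ∀ (q : EuclideanSpace ℝ (Fin n) → ℝ) (y v : EuclideanSpace ℝ (Fin n)),
      fderiv ℝ q y v = ⟪gradient q y, v⟫ := by
    intro q y v
    rw [gradient, InnerProductSpace.toDual_symm_apply]
  have hhsub : Function.Surjective (fderiv ℝ h x) := by
    rw [hchain]; exact (hgsub _ hfx').comp (hfsub _ hx)
  have hgh0 : gradient h x ≠ 0 := by
    intro h0
    obtain ⟨z, hz⟩ := hhsub 1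
    rw [hgradn, h0, inner_zero_left] at hz
    exact one_ne_zero hz.symm
  have hgg0 : gradient g (f x) ≠ 0 := by
    intro h0
    obtain ⟨z, hz⟩ := hgsub _ hfx' 1
    rw [hgrad, h0, inner_zero_left] at hz
    exact one_ne_zero hz.symm
  set G := gradient g (f x) with hG
  set H := gradient h x with hH
  have hnH : (0:ℝ) < ⟪H, H⟫ := by
    rw [real_inner_self_eq_norm_sq]
    exact pow_pos (norm_pos_iff.mpr hgh0) 2
  have hnG : (0:ℝ) < ⟪G, G⟫ := by
    rw [real_inner_self_eq_norm_sq]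
    exact pow_pos (norm_pos_iff.mpr hgg0) 2
  set α : ℝ := ⟪G, G⟫ / ⟪H, H⟫ with hα
  have hαpos : 0 < α := div_pos hnG hnH
  have hαH : α * ⟪H, H⟫ = ⟪G, G⟫ := by
    rw [hα, div_mul_cancel₀ _ (ne_of_gt hnH)]
  have hDfH : fderiv ℝ g (f x) (fderiv ℝ f x H) = ⟪H, H⟫ := by
    have := congrArg (fun T => T H) hchain
    simp only [ContinuousLinearMap.comp_apply] at this
    rw [← this, hgradn]
  have hgG : fderiv ℝ g (f x) G = ⟪G, G⟫ := by
    rw [hgrad, ← hG]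
  have hw : fderiv ℝ g (f x) (G - α • fderiv ℝ f x H) = 0 := by
    rw [map_sub, map_smul, hDfH, hgG, smul_eq_mul, hαH, sub_self]
  obtain ⟨z, hz⟩ := hfsub _ hx (G - α • fderiv ℝ f x H)
  have hzker : z ∈ LinearMap.ker (fderiv ℝ h x : EuclideanSpace ℝ (Fin n) →ₗ[ℝ] ℝ) := by
    rw [LinearMap.mem_ker, hchain, ContinuousLinearMap.coe_coe, ContinuousLinearMap.comp_apply, hz, hw]
  rw [← htrans] at hzker
  obtain ⟨v₀, hv₀L, u, hu, hzsum⟩ := Submodule.mem_sup.mp hzker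
  set K : Submodule ℝ (EuclideanSpace ℝ (Fin n)) := L ⊓ LinearMap.ker (fderiv ℝ f x : EuclideanSpace ℝ (Fin n) →ₗ[ℝ] EuclideanSpace ℝ (Fin p)) with hK
  set v : EuclideanSpace ℝ (Fin n) :=
    v₀ - (K.orthogonalProjectionOnto v₀ : EuclideanSpace ℝ (Fin n)) with hv
  have hvL : v ∈ L := by
    apply Submodule.sub_mem _ hv₀L
    exact ((K.orthogonalProjectionOnto v₀).2 : _ ∈ K).1
  have hvorth : ∀ u' ∈ K, ⟪v, u'⟫ = 0 := by
    intro u' hu'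
    have := Submodule.sub_starProjection_mem_orthogonal (K := K) v₀
    rw [real_inner_comm]
    exact (Submodule.mem_orthogonal K _).mp this u' hu'
  have hDfv : fderiv ℝ f x v = G - α • fderiv ℝ f x H := by
    rw [hv, map_sub]
    have hk0 : fderiv ℝ f x ((K.orthogonalProjectionOnto v₀ : EuclideanSpace ℝ (Fin n))) = 0 :=
      ((K.orthogonalProjectionOnto v₀).2 : _ ∈ K).2
    have hu0 : fderiv ℝ f x u = 0 := hu
    have hv₀ : fderiv ℝ f x v₀ = G - α • fderiv ℝ f x H := by
      have := congrArg (fderiv ℝ f x) hzsum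
      rw [map_add, hu0, add_zero] at this
      rw [this, hz]
    rw [hv₀, hk0, sub_zero]
  have key : ∀ (w : EuclideanSpace ℝ (Fin n)) (β : ℝ), w ∈ L →
      fderiv ℝ f x (w + β • H) = G → β * ⟪H, H⟫ = ⟪G, G⟫ ∧
      fderiv ℝ f x w = G - β • fderiv ℝ f x H := by
    intro w β hwL heq
    have hDhw : fderiv ℝ g (f x) (fderiv ℝ f x w) = 0 := by
      have hw0 : fderiv ℝ h x w = 0 := hL hwL
      rw [hchain, ContinuousLinearMap.comp_apply] at hw0
      exact hw0
    have h2 := congrArg (fderiv ℝ g (f x)) heq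
    simp only [map_add, map_smul] at h2
    rw [hDhw, zero_add, hDfH, hgG, smul_eq_mul] at h2
    refine ⟨h2, ?_⟩
    have := congrArg (fun y => y - β • fderiv ℝ f x H) heq
    simp only [map_add, map_smul] at this ⊢
    rw [← this]; abel
  refine ⟨v, ⟨hvL, hvorth, α, hαpos, ?_⟩, ?_⟩
  · rw [map_add, map_smul, hDfv]
    abel
  · rintro v' ⟨hv'L, hv'orth, α', hα'pos, hv'eq⟩
    obtain ⟨hβ', hDf'⟩ := key v' α' hv'L hv'eq
    have hαα' : α' = α := mul_right_cancel₀ (ne_of_gt hnH) (hβ'.trans hαH.symm)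
    have hdiff : v' - v ∈ K := by
      refine ⟨Submodule.sub_mem _ hv'L hvL, ?_⟩
      have : fderiv ℝ f x (v' - v) = 0 := by
        rw [map_sub, hDf', hDfv, hαα', sub_self]
      exact this
    have h1 : ⟪v', v' - v⟫ = 0 := hv'orth _ hdiff
    have h2 : ⟪v, v' - v⟫ = 0 := hvorth _ hdiff
    have h3 : ⟪v' - v, v' - v⟫ = (0:ℝ) := by
      rw [inner_sub_left, h1, h2, sub_zero]
    exact sub_eq_zero.mp (inner_self_eq_zero.mp h3)
end

section
/- Let 𝔉(x) = ‖x‖ f(x)/‖f(x)‖ be the spherefication of a C¹ map f on U \ f⁻¹(0). Then for x ∈ U \ f⁻¹(0) and v ∈ ℝⁿ, ‖D𝔉ₓ(v)‖² = ⟨x,v⟩²/‖x‖² + (‖x‖²‖Dfₓ(v)‖² − ⟨𝔉(x), Dfₓ(v)⟩²)/‖f(x)‖². -/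
open scoped RealInnerProductSpace

lemma norm_comp_hasFDerivAt {E F : Type*} [NormedAddCommGroup E] [NormedSpace ℝ E]
    [NormedAddCommGroup F] [InnerProductSpace ℝ F] {g : E → F} {g' : E →L[ℝ] F} {x : E}
    (hg : HasFDerivAt g g' x) (h0 : g x ≠ 0) :
    HasFDerivAt (fun y => ‖g y‖) (‖g x‖⁻¹ • ((innerSL ℝ (g x)).comp g')) x := by
  have h2 := hg.norm_sq.sqrt (pow_ne_zero 2 (norm_ne_zero_iff.mpr h0))
  have hfun : (fun y => Real.sqrt (‖g y‖ ^ 2)) = fun y => ‖g y‖ :=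
    funext fun y => Real.sqrt_sq (norm_nonneg _)
  have h3 : ((1 / (2 * Real.sqrt (‖g x‖ ^ 2))) • (2 • (innerSL ℝ (g x)).comp g'))
      = ‖g x‖⁻¹ • ((innerSL ℝ (g x)).comp g') := by
    rw [Real.sqrt_sq (norm_nonneg _)]
    ext y
    have : ‖g x‖ ≠ 0 := norm_ne_zero_iff.mpr h0
    simp [two_smul, smul_smul]
    field_simp
    ring
  rw [hfun, h3] at h2
  exact h2

/-- Norm of the differential of the spherefication:
`‖D𝔉ₓ(v)‖² = ⟨x,v⟩²/‖x‖² + (‖x‖²‖Dfₓ(v)‖² − ⟨𝔉(x),Dfₓ(v)⟩²)/‖f(x)‖²`. -/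
theorem stmt_6 (n p : ℕ)
    (U : Set (EuclideanSpace ℝ (Fin n))) (hU : IsOpen U)
    (f : EuclideanSpace ℝ (Fin n) → EuclideanSpace ℝ (Fin p))
    (hf : ContDiffOn ℝ 1 f U)
    (h0U : (0 : EuclideanSpace ℝ (Fin n)) ∈ U) (hf0 : f 0 = 0)
    (F : EuclideanSpace ℝ (Fin n) → EuclideanSpace ℝ (Fin p))
    (hF : F = fun y => (‖y‖ / ‖f y‖) • f y)
    (x : EuclideanSpace ℝ (Fin n)) (hx : x ∈ U) (hfx : f x ≠ 0)
    (v : EuclideanSpace ℝ (Fin n)) :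
    ‖fderiv ℝ F x v‖ ^ 2 =
      ⟪x, v⟫ ^ 2 / ‖x‖ ^ 2
        + (‖x‖ ^ 2 * ‖fderiv ℝ f x v‖ ^ 2 - ⟪F x, fderiv ℝ f x v⟫ ^ 2) / ‖f x‖ ^ 2 := by
  have hx0 : x ≠ 0 := fun h => hfx (h ▸ hf0)
  have hr : ‖x‖ ≠ 0 := norm_ne_zero_iff.mpr hx0
  have hs : ‖f x‖ ≠ 0 := norm_ne_zero_iff.mpr hfx
  -- differentiability of f at x
  have hfd : HasFDerivAt f (fderiv ℝ f x) x :=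
    (((hf x hx).contDiffAt (hU.mem_nhds hx)).differentiableAt one_ne_zero).hasFDerivAt
  set f' := fderiv ℝ f x with hf'
  -- derivative of the norms
  have hn : HasFDerivAt (fun y : EuclideanSpace ℝ (Fin n) => ‖y‖)
      (‖x‖⁻¹ • ((innerSL ℝ x).comp (ContinuousLinearMap.id ℝ _))) x := by
    simpa using norm_comp_hasFDerivAt (hasFDerivAt_id x) hx0
  have hm : HasFDerivAt (fun y => ‖f y‖) (‖f x‖⁻¹ • ((innerSL ℝ (f x)).comp f')) x :=
    norm_comp_hasFDerivAt hfd hfx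
  -- derivative of the inverse of ‖f y‖
  have hinv : HasFDerivAt (fun y => (‖f y‖)⁻¹)
      ((-(‖f x‖ ^ 2)⁻¹) • (‖f x‖⁻¹ • ((innerSL ℝ (f x)).comp f'))) x := by
    have := (hasDerivAt_inv hs).comp_hasFDerivAt x hm
    simpa [Function.comp_def] using this
  -- derivative of c y = ‖y‖ * ‖f y‖⁻¹
  set c' : EuclideanSpace ℝ (Fin n) →L[ℝ] ℝ :=
    ‖x‖ • ((-(‖f x‖ ^ 2)⁻¹) • (‖f x‖⁻¹ • ((innerSL ℝ (f x)).comp f')))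
      + (‖f x‖)⁻¹ • (‖x‖⁻¹ • ((innerSL ℝ x).comp (ContinuousLinearMap.id ℝ _))) with hc'
  have hc : HasFDerivAt (fun y => ‖y‖ * (‖f y‖)⁻¹) c' x := hn.mul hinv
  have hFd : HasFDerivAt F ((‖x‖ * (‖f x‖)⁻¹) • f' + c'.smulRight (f x)) x := by
    have h := hc.smul hfd
    have : F = fun y => (‖y‖ * (‖f y‖)⁻¹) • f y := by
      rw [hF]; funext y; rw [div_eq_mul_inv]
    rw [this]
    exact h
  have hFv : fderiv ℝ F x v = (‖x‖ * (‖f x‖)⁻¹) • f' v + (c' v) • f x := by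
    rw [hFd.fderiv]; simp
  set w := f' v with hw
  set r := ‖x‖ with hrr
  set s := ‖f x‖ with hss
  have hcv : c' v = r * (-(s ^ 2)⁻¹ * (s⁻¹ * ⟪f x, w⟫)) + s⁻¹ * (r⁻¹ * ⟪x, v⟫) := by
    simp only [hc', ContinuousLinearMap.add_apply, ContinuousLinearMap.smul_apply,
      ContinuousLinearMap.coe_comp', Function.comp_apply, ContinuousLinearMap.coe_id', id_eq,
      innerSL_apply_apply, smul_eq_mul]
    rfl
  have hFxw : ⟪F x, w⟫ = (r / s) * ⟪f x, w⟫ := by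
    simp only [hF]
    rw [real_inner_smul_left]
  have key : ∀ (A B : ℝ) (u z : EuclideanSpace ℝ (Fin p)),
      ‖B • z + A • u‖ ^ 2 = B ^ 2 * ‖z‖ ^ 2 + 2 * A * B * ⟪u, z⟫ + A ^ 2 * ‖u‖ ^ 2 := by
    intro A B u z
    rw [norm_add_sq_real, norm_smul, norm_smul, real_inner_smul_left, real_inner_smul_right,
      real_inner_comm z u]
    simp only [mul_pow, Real.norm_eq_abs, sq_abs]
    ring
  rw [hFv, key, hcv, hFxw]
  field_simp
  ring
end

section
/- Let f : U → ℝᵖ be C¹, x ∈ U with f(x) ≠ 0, and v ∈ ℝⁿ. Then the spherical part of D𝔉ₓ(v) vanishes (i.e., D𝔉ₓ(v) is a scalar multiple of 𝔉(x)) if and only if Dfₓ(v) = (f(x)/‖f(x)‖²)·⟨f(x), Dfₓ(v)⟩, i.e., Dfₓ(v) is the orthogonal projection of itself onto the line through f(x). -/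
open scoped RealInnerProductSpace

/-- The spherical part of `D𝔉ₓ(v)` vanishes (i.e. `D𝔉ₓ(v)` is a multiple of `𝔉(x)`)
iff `Dfₓ(v)` equals its orthogonal projection onto the line through `f(x)`. -/
theorem stmt_8 (n p : ℕ)
    (U : Set (EuclideanSpace ℝ (Fin n))) (hU : IsOpen U)
    (f : EuclideanSpace ℝ (Fin n) → EuclideanSpace ℝ (Fin p))
    (hf : ContDiffOn ℝ 1 f U)
    (h0U : (0 : EuclideanSpace ℝ (Fin n)) ∈ U) (hf0 : f 0 = 0)
    (F : EuclideanSpace ℝ (Fin n) → EuclideanSpace ℝ (Fin p))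
    (hF : F = fun y => (‖y‖ / ‖f y‖) • f y)
    (x : EuclideanSpace ℝ (Fin n)) (hx : x ∈ U) (hfx : f x ≠ 0)
    (v : EuclideanSpace ℝ (Fin n)) :
    (∃ c : ℝ, fderiv ℝ F x v = c • F x) ↔
      fderiv ℝ f x v = (⟪f x, fderiv ℝ f x v⟫ / ‖f x‖ ^ 2) • f x := by
  have hx0 : x ≠ 0 := by rintro rfl; exact hfx hf0
  have hfd : DifferentiableAt ℝ f x :=
    (hf.differentiableOn one_ne_zero).differentiableAt (hU.mem_nhds hx)
  have hnx : DifferentiableAt ℝ (fun y : EuclideanSpace ℝ (Fin n) => ‖y‖) x :=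
    differentiableAt_id.norm ℝ hx0
  have hnf : DifferentiableAt ℝ (fun y => ‖f y‖) x := hfd.norm ℝ hfx
  have hg : DifferentiableAt ℝ (fun y => ‖y‖ / ‖f y‖) x := by
    simp only [div_eq_mul_inv]
    exact hnx.mul (hnf.inv (norm_ne_zero_iff.2 hfx))
  set D := fderiv ℝ f x v with hD
  set a := fderiv ℝ (fun y => ‖y‖ / ‖f y‖) x v with ha
  have hr : (0:ℝ) < ‖x‖ / ‖f x‖ :=
    div_pos (norm_pos_iff.2 hx0) (norm_pos_iff.2 hfx)
  set r := ‖x‖ / ‖f x‖ with hrdef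
  have hFx : F x = r • f x := by rw [hF]
  have hDF : fderiv ℝ F x v = a • f x + r • D := by
    rw [hF, fderiv_fun_smul hg hfd]
    simp [ha, hD, hrdef, add_comm]
  -- first, reduce both sides to "D is a multiple of f x"
  have key : (∃ c : ℝ, fderiv ℝ F x v = c • F x) ↔ ∃ t : ℝ, D = t • f x := by
    constructor
    · rintro ⟨c, hc⟩
      refine ⟨(c * r - a) / r, ?_⟩
      rw [hDF, hFx, smul_smul] at hc
      have : r • D = (c * r - a) • f x := by
        rw [sub_smul]; linear_combination (norm := module) hc
      have := congrArg (fun z => r⁻¹ • z) this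
      simpa [smul_smul, inv_mul_cancel₀ hr.ne', div_eq_inv_mul, mul_comm] using this
    · rintro ⟨t, ht⟩
      refine ⟨(a + r * t) / r, ?_⟩
      rw [hDF, hFx, ht, smul_smul, smul_smul, div_mul_cancel₀ _ hr.ne', add_smul]
  rw [key]
  constructor
  · rintro ⟨t, ht⟩
    rw [ht, real_inner_smul_right, real_inner_self_eq_norm_sq]
    rw [mul_div_assoc, div_self (pow_ne_zero 2 (norm_ne_zero_iff.2 hfx)), mul_one]
  · intro h
    exact ⟨_, h⟩
end

section
/- Let w_f(x) = v̂_f(x) + α(x)∇h(x) and w_𝔉(x) = v̂_𝔉(x) + ∇𝔥(x) with α(x) > 0, and suppose v̂_f(x) and v̂_𝔉(x) are both orthogonal to both ∇h(x) and ∇𝔥(x), and that ∇h(x) and ∇𝔥(x) do not point in opposite directions. Define w̃(x) = ‖∇𝔥(x)‖·w_f(x) + α(x)‖∇h(x)‖·w_𝔉(x). Then ⟨w̃(x), ∇h(x)⟩ = α(x)‖∇𝔥(x)‖‖∇h(x)‖²(1 + cos θ) > 0 and ⟨w̃(x), ∇𝔥(x)⟩ = α(x)‖∇h(x)‖‖∇𝔥(x)‖²(1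 + cos θ) > 0, where θ is the angle between ∇h(x) and ∇𝔥(x). -/
open scoped RealInnerProductSpace

/-- If `w_f = v̂_f + α ∇h`, `w_𝔉 = v̂_𝔉 + ∇𝔥` with `α > 0`, the vectors `v̂_f, v̂_𝔉`
orthogonal to both gradients, and the gradients not pointing in opposite directions,
then `w̃ = ‖∇𝔥‖ w_f + α ‖∇h‖ w_𝔉` satisfies
`⟨w̃, ∇h⟩ = α‖∇𝔥‖‖∇h‖²(1+cos θ) > 0` and `⟨w̃, ∇𝔥⟩ = α‖∇h‖‖∇𝔥‖²(1+cos θ) > 0`. -/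
theorem stmt_15 (n : ℕ)
    (gh gH vf vF wf wF wt : EuclideanSpace ℝ (Fin n)) (α : ℝ)
    (hgh : gh ≠ 0) (hgH : gH ≠ 0) (hα : 0 < α)
    (hvf1 : ⟪vf, gh⟫ = 0) (hvf2 : ⟪vf, gH⟫ = 0)
    (hvF1 : ⟪vF, gh⟫ = 0) (hvF2 : ⟪vF, gH⟫ = 0)
    (hnod : ¬ ∃ l : ℝ, 0 < l ∧ gh = (-l) • gH)
    (hwf : wf = vf + α • gh) (hwF : wF = vF + gH)
    (hwt : wt = ‖gH‖ • wf + (α * ‖gh‖) • wF) :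
    (⟪wt, gh⟫ = α * ‖gH‖ * ‖gh‖ ^ 2 * (1 + ⟪gh, gH⟫ / (‖gh‖ * ‖gH‖)) ∧
      0 < ⟪wt, gh⟫) ∧
    (⟪wt, gH⟫ = α * ‖gh‖ * ‖gH‖ ^ 2 * (1 + ⟪gh, gH⟫ / (‖gh‖ * ‖gH‖)) ∧
      0 < ⟪wt, gH⟫) := by
  have hnh : (0:ℝ) < ‖gh‖ := norm_pos_iff.mpr hgh
  have hnH : (0:ℝ) < ‖gH‖ := norm_pos_iff.mpr hgH
  -- strict Cauchy-Schwarz in the negative direction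
  have hlt : ⟪gh, -gH⟫ < ‖gh‖ * ‖-gH‖ := by
    rw [inner_lt_norm_mul_iff_real]
    intro h
    apply hnod
    refine ⟨‖gh‖ / ‖gH‖, div_pos hnh hnH, ?_⟩
    rw [norm_neg] at h
    have h2 := congrArg (fun v : EuclideanSpace ℝ (Fin n) => (‖gH‖⁻¹ : ℝ) • v) h
    rw [smul_smul, smul_smul, inv_mul_cancel₀ hnH.ne', one_smul] at h2
    conv_lhs => rw [h2]
    rw [neg_smul, smul_neg, div_eq_inv_mul]
  have hkey : -(‖gh‖ * ‖gH‖) < ⟪gh, gH⟫ := by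
    rw [inner_neg_right, norm_neg, neg_lt] at hlt
    linarith
  have hsum : 0 < ‖gh‖ * ‖gH‖ + ⟪gh, gH⟫ := by linarith
  have hcos : 0 < 1 + ⟪gh, gH⟫ / (‖gh‖ * ‖gH‖) := by
    have h2 : 0 < (‖gh‖ * ‖gH‖ + ⟪gh, gH⟫) / (‖gh‖ * ‖gH‖) :=
      div_pos hsum (mul_pos hnh hnH)
    rw [show 1 + ⟪gh, gH⟫ / (‖gh‖ * ‖gH‖)
        = (‖gh‖ * ‖gH‖ + ⟪gh, gH⟫) / (‖gh‖ * ‖gH‖) by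
      field_simp]
    exact h2
  have hsym : ⟪gH, gh⟫ = ⟪gh, gH⟫ := real_inner_comm _ _
  have e1 : ⟪wt, gh⟫ = ‖gH‖ * (α * ‖gh‖ ^ 2) + α * ‖gh‖ * ⟪gh, gH⟫ := by
    simp only [hwt, hwf, hwF, inner_add_left, real_inner_smul_left, hvf1, hvF1,
      real_inner_self_eq_norm_sq, hsym]
    ring
  have e2 : ⟪wt, gH⟫ = ‖gH‖ * (α * ⟪gh, gH⟫) + α * ‖gh‖ * ‖gH‖ ^ 2 := by
    simp only [hwt, hwf, hwF, inner_add_left, real_inner_smul_left, hvf2, hvF2,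
      real_inner_self_eq_norm_sq]
    ring
  refine ⟨⟨?_, ?_⟩, ?_, ?_⟩
  · rw [e1]; field_simp
  · rw [e1]; nlinarith [mul_pos (mul_pos hα hnh) hsum]
  · rw [e2]; field_simp; ring
  · rw [e2]; nlinarith [mul_pos (mul_pos hα hnH) hsum]
end

section
/- If v₁ + α r and v₂ + β s point in opposite directions, where α, β > 0 and v₁, v₂ are orthogonal to the span of r and s, then r and s point in opposite directions. -/
open scoped RealInnerProductSpace

/-- If `v₁ + α r` and `v₂ + β s` point in opposite directions, where `α, β > 0` and
`v₁, v₂` are orthogonal to the span of `r` and `s`, then `r` and `s` point in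
opposite directions. -/
theorem stmt_18 (n : ℕ) (r s v₁ v₂ : EuclideanSpace ℝ (Fin n))
    (hv₁ : ∀ u ∈ Submodule.span ℝ ({r, s} : Set (EuclideanSpace ℝ (Fin n))), ⟪v₁, u⟫ = 0)
    (hv₂ : ∀ u ∈ Submodule.span ℝ ({r, s} : Set (EuclideanSpace ℝ (Fin n))), ⟪v₂, u⟫ = 0)
    (α β : ℝ) (hα : 0 < α) (hβ : 0 < β)
    (hopp : ∃ l : ℝ, 0 < l ∧ v₁ + α • r = (-l) • (v₂ + β • s)) :
    ∃ l : ℝ, 0 < l ∧ r = (-l) • s := by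
  obtain ⟨l, hl, heq⟩ := hopp
  have hr : r ∈ Submodule.span ℝ ({r, s} : Set (EuclideanSpace ℝ (Fin n))) :=
    Submodule.subset_span (by simp)
  have hs : s ∈ Submodule.span ℝ ({r, s} : Set (EuclideanSpace ℝ (Fin n))) :=
    Submodule.subset_span (by simp)
  set u := α • r + (l * β) • s with hu
  have humem : u ∈ Submodule.span ℝ ({r, s} : Set (EuclideanSpace ℝ (Fin n))) :=
    Submodule.add_mem _ (Submodule.smul_mem _ _ hr) (Submodule.smul_mem _ _ hs)
  have hw : v₁ + l • v₂ = -u := by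
    rw [hu]
    linear_combination (norm := module) heq
  have hz : u = 0 := by
    have h1 : ⟪v₁ + l • v₂, u⟫ = 0 := by
      rw [inner_add_left, inner_smul_left, hv₁ u humem, hv₂ u humem]
      simp
    rw [hw] at h1
    have : ⟪u, u⟫ = (0 : ℝ) := by
      rw [inner_neg_left] at h1; linarith
    exact inner_self_eq_zero.mp this
  have hrs : α • r = (-(l * β)) • s := by
    have h : α • r + (l * β) • s = 0 := hz
    linear_combination (norm := module) h
  refine ⟨l * β / α, by positivity, ?_⟩
  have := congrArg (fun x => α⁻¹ • x) hrs
  simp only [smul_smul] at this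
  rw [inv_mul_cancel₀ hα.ne', one_smul] at this
  rw [this]
  congr 1
  field_simp
end

section
/- Let f : U → ℝᵖ be C¹ and suppose f(x) ≠ 0. If the restriction φ = f/‖f‖ of the unit-direction map to the sphere S of radius ‖x‖ through x is a submersion at x into S^{p-1}, then the spherefication 𝔉(y) = ‖y‖f(y)/‖f(y)‖ is a submersion at x as a map into ℝᵖ. -/
open scoped RealInnerProductSpace

/-- Derivative of the norm at a nonzero point of a real inner product space. -/
lemma aux_hasFDerivAt_norm {E : Type*} [NormedAddCommGroup E] [InnerProductSpace ℝ E]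
    {x : E} (hx : x ≠ 0) :
    HasFDerivAt (fun y : E => ‖y‖) (‖x‖⁻¹ • innerSL ℝ x) x := by
  have hx' : (0 : ℝ) < ‖x‖ := norm_pos_iff.mpr hx
  have hsq : HasFDerivAt (fun y : E => ‖y‖ ^ 2) (2 • innerSL ℝ x) x :=
    (hasStrictFDerivAt_norm_sq x).hasFDerivAt
  have hs : HasDerivAt Real.sqrt (1 / (2 * Real.sqrt (‖x‖ ^ 2))) (‖x‖ ^ 2) :=
    Real.hasDerivAt_sqrt (by positivity)
  have hcomp := hs.comp_hasFDerivAt x hsq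
  have heq : (fun y : E => Real.sqrt (‖y‖ ^ 2)) = fun y : E => ‖y‖ := by
    funext y; rw [Real.sqrt_sq (norm_nonneg y)]
  simp only [Function.comp_def] at hcomp
  rw [heq] at hcomp
  refine hcomp.congr_fderiv ?_
  ext v
  simp only [ContinuousLinearMap.smul_apply, ContinuousLinearMap.smul_apply,
    innerSL_apply_apply]
  rw [Real.sqrt_sq (norm_nonneg x)]
  simp [two_smul]
  field_simp
  ring

/-- If the restriction of `φ = f/‖f‖` to the sphere of radius `‖x‖` through `x` is a
submersion at `x` into `S^{p-1}` (every vector tangent to `S^{p-1}` at `φ(x)` is the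
image of a vector tangent to the sphere at `x`), then the spherefication
`𝔉(y) = ‖y‖ f(y)/‖f(y)‖` is a submersion at `x` as a map into `ℝᵖ`. -/
theorem stmt_19 (n p : ℕ)
    (U : Set (EuclideanSpace ℝ (Fin n))) (hU : IsOpen U)
    (f : EuclideanSpace ℝ (Fin n) → EuclideanSpace ℝ (Fin p))
    (hf : ContDiffOn ℝ 1 f U)
    (x : EuclideanSpace ℝ (Fin n)) (hx : x ∈ U) (hx0 : x ≠ 0) (hfx : f x ≠ 0)
    (φ F : EuclideanSpace ℝ (Fin n) → EuclideanSpace ℝ (Fin p))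
    (hφ : φ = fun y => ‖f y‖⁻¹ • f y)
    (hF : F = fun y => (‖y‖ / ‖f y‖) • f y)
    (hsub : ∀ w : EuclideanSpace ℝ (Fin p), ⟪w, f x⟫ = 0 →
      ∃ v : EuclideanSpace ℝ (Fin n), ⟪v, x⟫ = 0 ∧ fderiv ℝ φ x v = w) :
    Function.Surjective (fderiv ℝ F x) := by
  have hnx : (0:ℝ) < ‖x‖ := norm_pos_iff.mpr hx0
  have hnfx : (0:ℝ) < ‖f x‖ := norm_pos_iff.mpr hfx
  -- differentiability of f at x
  have hfd : DifferentiableAt ℝ f x :=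
    ((hf.differentiableOn one_ne_zero) x hx).differentiableAt (hU.mem_nhds hx)
  have hnfd : DifferentiableAt ℝ (fun y => ‖f y‖) x := hfd.norm ℝ hfx
  have hφd : DifferentiableAt ℝ φ x := by
    rw [hφ]
    exact (hnfd.inv (ne_of_gt hnfx)).smul hfd
  set Dφ : EuclideanSpace ℝ (Fin n) →L[ℝ] EuclideanSpace ℝ (Fin p) := fderiv ℝ φ x with hDφdef
  have hDφ : HasFDerivAt φ Dφ x := hφd.hasFDerivAt
  set N : EuclideanSpace ℝ (Fin n) →L[ℝ] ℝ := ‖x‖⁻¹ • innerSL ℝ x with hNdef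
  have hN : HasFDerivAt (fun y : EuclideanSpace ℝ (Fin n) => ‖y‖) N x :=
    aux_hasFDerivAt_norm hx0
  -- F = ‖y‖ • φ y
  have hFeq : F = fun y => ‖y‖ • φ y := by
    rw [hF, hφ]
    funext y
    rw [div_eq_mul_inv, mul_smul]
  have hFD : HasFDerivAt F (‖x‖ • Dφ + N.smulRight (φ x)) x := by
    rw [hFeq]
    exact hN.smul hDφ
  have hfderivF : fderiv ℝ F x = ‖x‖ • Dφ + N.smulRight (φ x) := hFD.fderiv
  -- tangency: ⟪φ x, Dφ v⟫ = 0 for all v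
  have htan : ∀ v, ⟪φ x, Dφ v⟫ = 0 := by
    have hne : ∀ᶠ y in nhds x, f y ≠ 0 := hfd.continuousAt.eventually_ne hfx
    have hone : (fun y => ‖φ y‖ ^ 2) =ᶠ[nhds x] fun _ => (1:ℝ) := by
      filter_upwards [hne] with y hy
      rw [hφ]
      simp only [norm_smul, norm_inv, norm_norm]
      rw [inv_mul_cancel₀ (norm_ne_zero_iff.mpr hy)]
      norm_num
    have h0 : HasFDerivAt (fun y => ‖φ y‖ ^ 2)
        (0 : EuclideanSpace ℝ (Fin n) →L[ℝ] ℝ) x :=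
      (hasFDerivAt_const (1:ℝ) x).congr_of_eventuallyEq hone
    have h2 : HasFDerivAt (fun y => ‖φ y‖ ^ 2)
        (2 • (innerSL ℝ (φ x)).comp Dφ) x := hDφ.norm_sq
    have := h2.unique h0
    intro v
    have := congrFun (congrArg (fun (L : EuclideanSpace ℝ (Fin n) →L[ℝ] ℝ) => (L : EuclideanSpace ℝ (Fin n) → ℝ)) this) v
    simp only [two_smul, ContinuousLinearMap.add_apply, ContinuousLinearMap.coe_comp',
      Function.comp_apply, innerSL_apply_apply, ContinuousLinearMap.zero_apply] at this
    linarith [this]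
  -- derivative evaluated
  have hDval : ∀ v, fderiv ℝ F x v = ‖x‖ • Dφ v + (‖x‖⁻¹ * ⟪x, v⟫) • φ x := by
    intro v
    rw [hfderivF]
    simp [N, mul_comm]
  intro w
  -- orthogonal decomposition of w against f x
  set c : ℝ := ⟪f x, w⟫ / ‖f x‖ ^ 2 with hc
  set wp : EuclideanSpace ℝ (Fin p) := w - c • f x with hwp
  have hwperp : ⟪wp, f x⟫ = 0 := by
    rw [hwp, inner_sub_left, real_inner_smul_left, real_inner_self_eq_norm_sq, hc,
      div_mul_cancel₀ _ (pow_ne_zero 2 (ne_of_gt hnfx)), real_inner_comm, sub_self]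
  obtain ⟨v, hvx, hvD⟩ := hsub wp hwperp
  -- the tangent vector Dφ x
  have huperp : ⟪Dφ x, f x⟫ = 0 := by
    have h1 : ⟪φ x, Dφ x⟫ = 0 := htan x
    rw [hφ] at h1
    simp only [real_inner_smul_left] at h1
    have h2 : ⟪f x, Dφ x⟫ = 0 := by
      rcases mul_eq_zero.mp h1 with h | h
      · exact absurd h (inv_ne_zero (ne_of_gt hnfx))
      · exact h
    rw [real_inner_comm]; exact h2
  obtain ⟨v', hvx', hvD'⟩ := hsub (Dφ x) huperp
  -- compute images
  have hφx : φ x = ‖f x‖⁻¹ • f x := by rw [hφ]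
  have hNv : ⟪x, v⟫ = 0 := by rw [real_inner_comm]; exact hvx
  have hNv' : ⟪x, v'⟫ = 0 := by rw [real_inner_comm]; exact hvx'
  have hDv : fderiv ℝ F x v = ‖x‖ • wp := by
    rw [hDval, hNv, hvD]; simp
  have hDxv' : fderiv ℝ F x (x - v') = ‖x‖ • φ x := by
    rw [map_sub, hDval, hDval, hNv', hvD']
    rw [real_inner_self_eq_norm_sq]
    have : ‖x‖⁻¹ * ‖x‖ ^ 2 = ‖x‖ := by field_simp
    rw [this]
    simp only [mul_zero, zero_smul, add_zero]
    abel
  -- candidate preimage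
  refine ⟨(c * ‖f x‖ / ‖x‖) • (x - v') + ‖x‖⁻¹ • v, ?_⟩
  rw [map_add, map_smul, map_smul, hDv, hDxv', hφx]
  rw [smul_smul, smul_smul, smul_smul]
  have h1 : c * ‖f x‖ / ‖x‖ * ‖x‖ * ‖f x‖⁻¹ = c := by field_simp
  have h2 : ‖x‖⁻¹ * ‖x‖ = 1 := inv_mul_cancel₀ (ne_of_gt hnx)
  rw [h1, h2, one_smul, hwp]
  abel
end
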